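/- arXiv:2309.05288 — 2 statements merged into one kernel-verified Lean document; each statement's English description precedes it below -/
import Mathlib

section
/- Let F be a finite field of characteristic p, let C be a linear code of length n over F with a permutation automorphism σ, and suppose every cycle of σ has length congruent to l modulo p, where l ≢ 0 (mod p). If C is self-dual with respect to the Euclidean inner product, then the projection code C_π = π(F_σ(C)) is also self-dual. -/
open Finset

/-- The action of a permutation `σ` on vectors by permuting coordinates: `(vσ) i = v (σ i)`. -/
def permAct {F : Type*} {n : ℕ} (σ : Equiv.Perm (Fin n)) (v : Fin n → F) : Fin n → F :=
  fun i => v (σ i)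

open Classical in
/-- The cycle (orbit) of `σ` containing the coordinate `i`, as a `Finset`
(fixed points are counted as cycles of length 1). -/
noncomputable def orbitOf {n : ℕ} (σ : Equiv.Perm (Fin n)) (i : Fin n) : Finset (Fin n) :=
  Finset.univ.filter (fun j => σ.SameCycle i j)

/-- The Euclidean inner product `u·v = ∑ i, u i * v i`. -/
def eInner {F : Type*} [Field F] {ι : Type*} [Fintype ι] (u v : ι → F) : F :=
  ∑ i, u i * v i

/-- The Euclidean dual of a set of vectors. -/
def dualSet {F : Type*} [Field F] {ι : Type*} [Fintype ι] (S : Set (ι → F)) : Set (ι → F) :=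
  {u | ∀ v ∈ S, eInner u v = 0}

/-- A set of vectors is self-orthogonal if it is contained in its dual. -/
def IsSelfOrthogonalSet {F : Type*} [Field F] {ι : Type*} [Fintype ι] (S : Set (ι → F)) : Prop :=
  S ⊆ dualSet S

/-- A set of vectors is self-dual if it equals its dual. -/
def IsSelfDualSet {F : Type*} [Field F] {ι : Type*} [Fintype ι] (S : Set (ι → F)) : Prop :=
  S = dualSet S

/-- A set of vectors is LCD (linear complementary dual) if it meets its dual only in `0`. -/
def IsLCDSet {F : Type*} [Field F] {ι : Type*} [Fintype ι] (S : Set (ι → F)) : Prop :=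
  S ∩ dualSet S = {0}

/-- The fixed subcode `F_σ(C) = {v ∈ C : vσ = v}`. -/
def fixedCode {F : Type*} [Field F] {n : ℕ} (σ : Equiv.Perm (Fin n))
    (C : Submodule F (Fin n → F)) : Set (Fin n → F) :=
  {v | v ∈ C ∧ permAct σ v = v}

/-- The subcode `E_σ(C) = {v ∈ C : the sum of the coordinates of v over each cycle of σ is 0}`. -/
def evenCode {F : Type*} [Field F] {n : ℕ} (σ : Equiv.Perm (Fin n))
    (C : Submodule F (Fin n → F)) : Set (Fin n → F) :=
  {v | v ∈ C ∧ ∀ i : Fin n, ∑ j ∈ orbitOf σ i, v j = 0}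

/-- The setoid on coordinates whose classes are the cycles (orbits) of `σ`. -/
def cycleSetoid {n : ℕ} (σ : Equiv.Perm (Fin n)) : Setoid (Fin n) :=
  ⟨σ.SameCycle, ⟨fun x => Equiv.Perm.SameCycle.refl σ x, fun h => h.symm, fun h h' => h.trans h'⟩⟩

/-- The set of cycles of `σ` (fixed points counted as cycles of length 1); if `σ` has `s`
cycles then `Cycles σ → F` is a copy of `F^s`. -/
abbrev Cycles {n : ℕ} (σ : Equiv.Perm (Fin n)) : Type :=
  Quotient (cycleSetoid σ)

noncomputable instance {n : ℕ} (σ : Equiv.Perm (Fin n)) : Fintype (Cycles σ) :=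
  @Fintype.ofFinite _ (Quotient.finite _)

/-- The projection `π` picking one coordinate from each cycle of `σ`; on a `σ`-fixed vector
this is the common value of the vector on each cycle. -/
noncomputable def projPi {F : Type*} {n : ℕ} (σ : Equiv.Perm (Fin n)) (v : Fin n → F) :
    Cycles σ → F :=
  fun c => v c.out

/-!
A `σ`-fixed vector is constant on each cycle, so for fixed `u, u'` the inner product
`u · u'` is `Σ_Ω |Ω| u_Ω u'_Ω = l · (π u · π u')`; since `l ≠ 0` in `F`, `C_π` is
self-orthogonal. Conversely, for `w ∈ C_π^⊥` let `ŵ` be its constant lift along the cycles; then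
`ŵ · v = w · π(Sv)` where `Sv` is the vector of cycle sums of `v`. With `Ω_i` the cycle through
`i`, summing `v ∘ σ^k` over `k < N = Π_i |Ω_i|` gives `(N / l) · Sv` in `F`, where `N = l^n ≠ 0`;
so `Sv ∈ F_σ(C)`. Hence `ŵ ∈ C^⊥ = C` and `w = π ŵ ∈ C_π`.
-/

open Function

theorem Finset.sum_range_mul_of_periodic {M : Type*} [AddCommMonoid M] {g : ℕ → M} {d : ℕ}
    (hg : Periodic g d) (t : ℕ) : ∑ k ∈ range (t * d), g k = t • ∑ k ∈ range d, g k := by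
  induction t with
  | zero => simp
  | succ t ih =>
    rw [Nat.succ_mul, sum_range_add, ih, succ_nsmul]
    congr 1
    exact sum_congr rfl fun k _ => by rw [add_comm]; simpa using hg.nat_mul t k

section Orbits

variable {n : ℕ} {σ : Equiv.Perm (Fin n)}

lemma mem_orbitOf {i j : Fin n} : j ∈ orbitOf σ i ↔ σ.SameCycle i j := by
  classical
  simp [orbitOf]

lemma orbitOf_apply (i : Fin n) : orbitOf σ (σ i) = orbitOf σ i := by
  ext j
  simp [mem_orbitOf, Equiv.Perm.sameCycle_apply_left]

lemma minimalPeriod_perm_pos (i : Fin n) : 0 < minimalPeriod σ i :=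
  IsPeriodicPt.minimalPeriod_pos (orderOf_pos σ) <| by
    simp [IsPeriodicPt, IsFixedPt, Equiv.Perm.iterate_eq_pow, pow_orderOf_eq_one]

lemma orbitOf_eq_image_range (i : Fin n) :
    orbitOf σ i = (range (minimalPeriod σ i)).image fun k => (σ ^ k) i := by
  ext j
  simp only [mem_orbitOf, mem_image, mem_range]
  constructor
  · intro hij
    obtain ⟨k, -, rfl⟩ := hij.exists_pow_eq'
    refine ⟨k % minimalPeriod σ i, Nat.mod_lt _ (minimalPeriod_perm_pos i), ?_⟩
    simpa only [Equiv.Perm.iterate_eq_pow] using iterate_mod_minimalPeriod_eq (f := σ)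
  · rintro ⟨k, -, rfl⟩
    exact ⟨k, by simp⟩

lemma sum_orbitOf {M : Type*} [AddCommMonoid M] (f : Fin n → M) (i : Fin n) :
    ∑ j ∈ orbitOf σ i, f j = ∑ k ∈ range (minimalPeriod σ i), f ((σ ^ k) i) := by
  rw [orbitOf_eq_image_range, sum_image]
  intro a ha b hb hab
  exact iterate_injOn_Iio_minimalPeriod (by simpa using ha) (by simpa using hb) hab

lemma card_orbitOf (i : Fin n) : #(orbitOf σ i) = minimalPeriod σ i := by
  rw [card_eq_sum_ones, sum_orbitOf, sum_const, card_range, smul_eq_mul, mul_one]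

lemma sum_range_pow_apply_of_dvd {M : Type*} [AddCommMonoid M] (f : Fin n → M) (i : Fin n)
    {N : ℕ} (hN : #(orbitOf σ i) ∣ N) :
    ∑ k ∈ range N, f ((σ ^ k) i) = (N / #(orbitOf σ i)) • ∑ j ∈ orbitOf σ i, f j := by
  rw [card_orbitOf] at hN ⊢
  obtain ⟨t, rfl⟩ := hN
  have hperiodic : Periodic (fun k => f ((σ ^ k) i)) (minimalPeriod σ i) := fun k => by
    have hi : (σ ^ minimalPeriod σ i) i = i := by
      simpa only [IsPeriodicPt, IsFixedPt, Equiv.Perm.iterate_eq_pow] using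
        isPeriodicPt_minimalPeriod σ i
    simp only [pow_add, Equiv.Perm.mul_apply, hi]
  rw [Nat.mul_div_cancel_left _ (minimalPeriod_perm_pos i), mul_comm,
    sum_range_mul_of_periodic hperiodic, sum_orbitOf]

lemma sum_eq_sum_cycles {M : Type*} [AddCommMonoid M] (f : Fin n → M) :
    ∑ i, f i = ∑ c : Cycles σ, ∑ i ∈ orbitOf σ c.out, f i := by
  classical
  rw [← sum_fiberwise univ (fun i => Quotient.mk (cycleSetoid σ) i) f]
  refine sum_congr rfl fun c _ => sum_congr ?_ fun _ _ => rfl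
  ext j
  rw [mem_filter, mem_orbitOf]
  simp only [mem_univ, true_and]
  constructor
  · rintro rfl
    exact Quotient.mk_out (s := cycleSetoid σ) j
  · intro h
    rw [← c.out_eq]
    exact Quotient.sound h.symm

lemma apply_eq_of_permAct_eq {F : Type*} {v : Fin n → F} (hv : permAct σ v = v) {i j : Fin n}
    (hij : σ.SameCycle i j) : v i = v j := by
  obtain ⟨k, -, rfl⟩ := hij.exists_pow_eq'
  clear hij
  induction k with
  | zero => rfl
  | succ k ih => rw [ih, pow_succ', Equiv.Perm.mul_apply]; exact (congrFun hv _).symm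

end Orbits

section Codes

variable {n : ℕ} {σ : Equiv.Perm (Fin n)}

noncomputable def cycleSum {M : Type*} [AddCommMonoid M] (σ : Equiv.Perm (Fin n))
    (v : Fin n → M) : Fin n → M :=
  fun i => ∑ j ∈ orbitOf σ i, v j

def liftCycles {M : Type*} (σ : Equiv.Perm (Fin n)) (w : Cycles σ → M) : Fin n → M :=
  fun i => w (Quotient.mk _ i)

lemma permAct_cycleSum {M : Type*} [AddCommMonoid M] (v : Fin n → M) :
    permAct σ (cycleSum σ v) = cycleSum σ v :=
  funext fun i => by simp only [permAct, cycleSum, orbitOf_apply]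

lemma cycleSum_of_permAct_eq {M : Type*} [AddCommMonoid M] {v : Fin n → M}
    (hv : permAct σ v = v) (i : Fin n) : cycleSum σ v i = #(orbitOf σ i) • v i := by
  rw [cycleSum, ← sum_const]
  exact sum_congr rfl fun j hj => (apply_eq_of_permAct_eq hv (mem_orbitOf.mp hj)).symm

lemma permAct_liftCycles {M : Type*} (w : Cycles σ → M) :
    permAct σ (liftCycles σ w) = liftCycles σ w :=
  funext fun i => congrArg w <| Quotient.sound <|
    Equiv.Perm.sameCycle_apply_left.mpr (Equiv.Perm.SameCycle.refl σ i)

lemma projPi_liftCycles {M : Type*} (w : Cycles σ → M) : projPi σ (liftCycles σ w) = w :=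
  funext fun c => congrArg w c.out_eq

lemma comp_pow_mem {R M : Type*} [Semiring R] [AddCommMonoid M] [Module R M]
    {C : Submodule R (Fin n → M)} (hC : ∀ v ∈ C, permAct σ v ∈ C) {v : Fin n → M}
    (hv : v ∈ C) (k : ℕ) : (fun i => v ((σ ^ k) i)) ∈ C := by
  induction k with
  | zero => simpa using hv
  | succ k ih => rw [pow_succ]; exact hC _ ih

variable {F : Type*} [Field F]

lemma cycleSum_mem {C : Submodule F (Fin n → F)} (hC : ∀ v ∈ C, permAct σ v ∈ C) {c : F}
    (hc : c ≠ 0) (hcard : ∀ i, (#(orbitOf σ i) : F) = c) {v : Fin n → F} (hv : v ∈ C) :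
    cycleSum σ v ∈ C := by
  set N := ∏ i, #(orbitOf σ i)
  have hdvd : ∀ i, #(orbitOf σ i) ∣ N := fun i => dvd_prod_of_mem _ (mem_univ i)
  have hN : (N / c : F) ≠ 0 := by
    rw [Nat.cast_prod, prod_congr rfl fun i _ => hcard i, prod_const]
    exact div_ne_zero (pow_ne_zero _ hc) hc
  have hsum : ∑ k ∈ range N, (fun i => v ((σ ^ k) i)) = (N / c : F) • cycleSum σ v := by
    funext i
    rw [Finset.sum_apply, sum_range_pow_apply_of_dvd v i (hdvd i), nsmul_eq_mul,
      Nat.cast_div (hdvd i) (by rw [hcard]; exact hc), hcard]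
    rfl
  rw [← C.smul_mem_iff hN, ← hsum]
  exact C.sum_mem fun k _ => comp_pow_mem hC hv k

lemma eInner_eq_eInner_projPi_cycleSum {u : Fin n → F} (hu : permAct σ u = u) (v : Fin n → F) :
    eInner u v = eInner (projPi σ u) (projPi σ (cycleSum σ v)) := by
  rw [eInner, sum_eq_sum_cycles]
  refine sum_congr rfl fun c _ => ?_
  rw [projPi, projPi, cycleSum, mul_sum]
  exact sum_congr rfl fun j hj => by rw [apply_eq_of_permAct_eq hu (mem_orbitOf.mp hj)]

lemma eInner_eq_mul_eInner_projPi {c : F} (hcard : ∀ i, (#(orbitOf σ i) : F) = c)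
    {u u' : Fin n → F} (hu : permAct σ u = u) (hu' : permAct σ u' = u') :
    eInner u u' = c * eInner (projPi σ u) (projPi σ u') := by
  rw [eInner_eq_eInner_projPi_cycleSum hu, eInner, eInner, mul_sum]
  refine sum_congr rfl fun x _ => ?_
  simp only [projPi, cycleSum_of_permAct_eq hu', nsmul_eq_mul, hcard]
  ring

end Codes

theorem proj_code_of_code_general {F : Type*} [Field F] (p : ℕ) [CharP F p]
    {n : ℕ} (σ : Equiv.Perm (Fin n)) (C : Submodule F (Fin n → F))
    (hC : ∀ v, v ∈ C ↔ permAct σ v ∈ C)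
    (l : ℕ) (hl : ¬ l ≡ 0 [MOD p])
    (hcyc : ∀ i : Fin n, (orbitOf σ i).card ≡ l [MOD p])
    (h : IsSelfDualSet (C : Set (Fin n → F))) :
    IsSelfDualSet (projPi σ '' fixedCode σ C) := by
  have hlF : (l : F) ≠ 0 := by
    rwa [Ne, CharP.cast_eq_zero_iff F p, ← Nat.modEq_zero_iff_dvd]
  have hcard : ∀ i, (#(orbitOf σ i) : F) = l := fun i => CharP.natCast_eq_natCast' F p (hcyc i)
  apply Set.Subset.antisymm
  · rintro _ ⟨u, ⟨huC, hu⟩, rfl⟩ _ ⟨u', ⟨hu'C, hu'⟩, rfl⟩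
    have huu' : eInner u u' = 0 := (h.subset huC) u' hu'C
    rw [eInner_eq_mul_eInner_projPi hcard hu hu'] at huu'
    exact (mul_eq_zero.mp huu').resolve_left hlF
  · intro w hw
    refine ⟨liftCycles σ w, ⟨?_, permAct_liftCycles w⟩, projPi_liftCycles w⟩
    change liftCycles σ w ∈ (C : Set (Fin n → F))
    rw [h]
    intro v hv
    rw [eInner_eq_eInner_projPi_cycleSum (permAct_liftCycles w), projPi_liftCycles]
    exact hw _ ⟨_, ⟨cycleSum_mem (fun v => (hC v).mp) hlF hcard hv, permAct_cycleSum v⟩, rfl⟩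

/-- Let `C` be a linear code over a finite field of characteristic `p` with
a permutation automorphism `σ`, all of whose cycles have length congruent to `l ≢ 0 (mod p)`.
If `C` is self-dual with respect to the Euclidean inner product, then so is the projection
code `C_π = π(F_σ(C))`. -/
theorem proj_code_of_code {F : Type*} [Field F] [Fintype F] (p : ℕ) [CharP F p]
    {n : ℕ} (σ : Equiv.Perm (Fin n)) (C : Submodule F (Fin n → F))
    (hC : ∀ v, v ∈ C ↔ permAct σ v ∈ C)
    (l : ℕ) (hl : ¬ l ≡ 0 [MOD p])
    (hcyc : ∀ i : Fin n, (orbitOf σ i).card ≡ l [MOD p])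
    (h : IsSelfDualSet (C : Set (Fin n → F))) :
    IsSelfDualSet (projPi σ '' fixedCode σ C) :=
  proj_code_of_code_general p σ C hC l hl hcyc h
end

section
/- Let F be a finite field of characteristic p with p not dividing m, and let C be a linear code of length n = cm + f over F with a permutation automorphism σ of type m-(c,f) (c disjoint m-cycles and f fixed points). Then C is a Euclidean LCD code if and only if both F_σ(C) and E_σ(C) are Euclidean LCD codes. -/
open Finset

/-- The permutation action of a permutation of type `m-(c,f)` (c disjoint `m`-cycles and `f`
fixed points) on `F^{cm+f}`, where coordinates are indexed by `(Fin c × ZMod m) ⊕ Fin f`. -/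
def aqcShift {F : Type*} {c m f : ℕ} (v : (Fin c × ZMod m) ⊕ Fin f → F) :
    (Fin c × ZMod m) ⊕ Fin f → F :=
  fun x => match x with
  | .inl ij => v (.inl (ij.1, ij.2 + 1))
  | .inr j => v (.inr j)

/-- The projection `π : F^{cm+f} → F^{c+f}`; on a `σ`-fixed vector it returns the common value
on each cycle (fixed points counted as cycles of length 1). -/
def aqcPi {F : Type*} {c m f : ℕ} (v : (Fin c × ZMod m) ⊕ Fin f → F) :
    Fin c ⊕ Fin f → F :=
  fun x => match x with
  | .inl i => v (.inl (i, 0))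
  | .inr j => v (.inr j)

/-- The fixed subcode `F_σ(C)` for a permutation of type `m-(c,f)`. -/
def aqcFixedCode {F : Type*} [Field F] {c m f : ℕ}
    (C : Submodule F ((Fin c × ZMod m) ⊕ Fin f → F)) : Set ((Fin c × ZMod m) ⊕ Fin f → F) :=
  {v | v ∈ C ∧ aqcShift v = v}

/-- The subcode `E_σ(C)` for a permutation of type `m-(c,f)`: codewords whose coordinate sum
over every cycle (including the singleton cycles at the fixed points) vanishes. -/
def aqcEvenCode {F : Type*} [Field F] {c m f : ℕ} [NeZero m]
    (C : Submodule F ((Fin c × ZMod m) ⊕ Fin f → F)) : Set ((Fin c × ZMod m) ⊕ Fin f → F) :=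
  {v | v ∈ C ∧ (∀ i : Fin c, ∑ j : ZMod m, v (.inl (i, j)) = 0) ∧ (∀ j : Fin f, v (.inr j) = 0)}

/-!
Averaging over the group generated by `σ`, `P v = m⁻¹ ∑_{k<m} σ^k v` (which needs `p ∤ m`),
splits each codeword as `v = P v + (v - P v)` with `P v ∈ F_σ(C)` and `v - P v ∈ E_σ(C)`.
A `σ`-fixed vector is constant on every cycle, so it is orthogonal to every vector whose cycle
sums vanish. Hence `C = F_σ(C) ⊕ E_σ(C)` is an orthogonal decomposition, and `C ∩ C^⊥` is the
sum of the corresponding intersections for the two summands.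
-/

open Matrix

section EuclideanLCD

variable {F ι : Type*} [Field F] [Fintype ι]

theorem eInner_comm (u v : ι → F) : eInner u v = eInner v u := dotProduct_comm u v

theorem eInner_add_left (u v w : ι → F) : eInner (u + v) w = eInner u w + eInner v w :=
  add_dotProduct u v w

theorem eInner_add_right (u v w : ι → F) : eInner u (v + w) = eInner u v + eInner u w :=
  dotProduct_add u v w

theorem isLCDSet_iff {S : Set (ι → F)} :
    IsLCDSet S ↔ 0 ∈ S ∧ ∀ u ∈ S, u ∈ dualSet S → u = 0 := by
  refine ⟨fun h => ⟨(h.symm.subset rfl).1, fun u hu hu' => h.subset ⟨hu, hu'⟩⟩, ?_⟩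
  rintro ⟨h0, h⟩
  refine Set.Subset.antisymm (fun u hu => h u hu.1 hu.2) ?_
  rintro _ rfl
  exact ⟨h0, fun v _ => zero_dotProduct v⟩

variable {S A B : Set (ι → F)}

theorem mem_dualSet_of_orthogonal_decomposition
    (horth : ∀ a ∈ A, ∀ b ∈ B, eInner a b = 0)
    (hdecomp : ∀ v ∈ S, ∃ a ∈ A, ∃ b ∈ B, v = a + b)
    {u : ι → F} (hu : u ∈ A) (hu' : u ∈ dualSet A) : u ∈ dualSet S := by
  intro v hv
  obtain ⟨a, ha, b, hb, rfl⟩ := hdecomp v hv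
  rw [eInner_add_right, hu' a ha, horth u hu b hb, add_zero]

theorem mem_dualSet_of_add_mem_dualSet (hA : A ⊆ S)
    (horth : ∀ a ∈ A, ∀ b ∈ B, eInner a b = 0)
    {a b : ι → F} (hb : b ∈ B) (hab : a + b ∈ dualSet S) : a ∈ dualSet A := by
  intro a' ha'
  have h := hab a' (hA ha')
  rwa [eInner_add_left, eInner_comm b, horth a' ha' b hb, add_zero] at h

theorem isLCDSet_iff_of_orthogonal_decomposition (hA : A ⊆ S) (hB : B ⊆ S)
    (h0A : 0 ∈ A) (h0B : 0 ∈ B) (horth : ∀ a ∈ A, ∀ b ∈ B, eInner a b = 0)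
    (hdecomp : ∀ v ∈ S, ∃ a ∈ A, ∃ b ∈ B, v = a + b) :
    IsLCDSet S ↔ IsLCDSet A ∧ IsLCDSet B := by
  have horth' : ∀ b ∈ B, ∀ a ∈ A, eInner b a = 0 := fun b hb a ha =>
    (eInner_comm b a).trans (horth a ha b hb)
  have hdecomp' : ∀ v ∈ S, ∃ b ∈ B, ∃ a ∈ A, v = b + a := fun v hv => by
    obtain ⟨a, ha, b, hb, rfl⟩ := hdecomp v hv
    exact ⟨b, hb, a, ha, add_comm a b⟩
  simp only [isLCDSet_iff]
  constructor
  · rintro ⟨-, hS⟩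
    exact ⟨⟨h0A, fun u hu hu' =>
        hS u (hA hu) (mem_dualSet_of_orthogonal_decomposition horth hdecomp hu hu')⟩,
      ⟨h0B, fun u hu hu' =>
        hS u (hB hu) (mem_dualSet_of_orthogonal_decomposition horth' hdecomp' hu hu')⟩⟩
  · rintro ⟨⟨-, hAlcd⟩, ⟨-, hBlcd⟩⟩
    refine ⟨hA h0A, fun u hu hu' => ?_⟩
    obtain ⟨a, ha, b, hb, rfl⟩ := hdecomp u hu
    have ha0 := hAlcd a ha (mem_dualSet_of_add_mem_dualSet hA horth hb hu')
    have hb0 := hBlcd b hb (mem_dualSet_of_add_mem_dualSet hB horth' ha (add_comm a b ▸ hu'))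
    rw [ha0, hb0, add_zero]

end EuclideanLCD

section PermutationOfType

variable {F : Type*} {c m f : ℕ}

theorem aqcShift_iterate_inl (v : (Fin c × ZMod m) ⊕ Fin f → F) (k : ℕ) (i : Fin c)
    (j : ZMod m) : (aqcShift^[k] v) (.inl (i, j)) = v (.inl (i, j + k)) := by
  induction k generalizing j with
  | zero => simp
  | succ k ih =>
    rw [Function.iterate_succ_apply', aqcShift, ih, Nat.cast_succ, add_comm (k : ZMod m),
      add_assoc]

theorem aqcShift_iterate_inr (v : (Fin c × ZMod m) ⊕ Fin f → F) (k : ℕ) (j : Fin f) :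
    (aqcShift^[k] v) (.inr j) = v (.inr j) := by
  induction k with
  | zero => rfl
  | succ k ih => rw [Function.iterate_succ_apply', ← ih]; rfl

variable [NeZero m]

theorem apply_inl_eq_of_aqcShift_eq_self {u : (Fin c × ZMod m) ⊕ Fin f → F}
    (hu : aqcShift u = u) (i : Fin c) (j : ZMod m) : u (.inl (i, j)) = u (.inl (i, 0)) := by
  have h := aqcShift_iterate_inl u j.val i 0
  rwa [Function.iterate_fixed hu, zero_add, ZMod.natCast_zmod_val, eq_comm] at h

variable [Field F]

theorem eInner_eq_zero_of_aqcShift_eq_self {u w : (Fin c × ZMod m) ⊕ Fin f → F}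
    (hu : aqcShift u = u) (hw : ∀ i : Fin c, ∑ j : ZMod m, w (.inl (i, j)) = 0)
    (hw' : ∀ j : Fin f, w (.inr j) = 0) : eInner u w = 0 := by
  simp only [eInner, Fintype.sum_sum_type, Fintype.sum_prod_type, hw', mul_zero, sum_const_zero,
    add_zero, apply_inl_eq_of_aqcShift_eq_self hu, ← mul_sum, hw]

def aqcAverage (v : (Fin c × ZMod m) ⊕ Fin f → F) : (Fin c × ZMod m) ⊕ Fin f → F
  | .inl ij => (m : F)⁻¹ * ∑ k : ZMod m, v (.inl (ij.1, k))
  | .inr j => v (.inr j)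

theorem aqcShift_aqcAverage (v : (Fin c × ZMod m) ⊕ Fin f → F) :
    aqcShift (aqcAverage v) = aqcAverage v := by
  funext x; cases x <;> rfl

theorem aqcAverage_eq_smul_sum (hm : (m : F) ≠ 0) (v : (Fin c × ZMod m) ⊕ Fin f → F) :
    aqcAverage v = (m : F)⁻¹ • ∑ k : ZMod m, aqcShift^[k.val] v := by
  funext x
  rcases x with ⟨i, j⟩ | j
  · simp only [aqcAverage, Pi.smul_apply, Finset.sum_apply, aqcShift_iterate_inl,
      ZMod.natCast_zmod_val, smul_eq_mul]
    exact congrArg _ (Equiv.sum_comp (Equiv.addLeft j) fun t => v (.inl (i, t))).symm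
  · simp only [aqcAverage, Pi.smul_apply, Finset.sum_apply, aqcShift_iterate_inr, sum_const,
      card_univ, ZMod.card, nsmul_eq_mul, smul_eq_mul, inv_mul_cancel_left₀ hm]

theorem sum_sub_aqcAverage_inl (hm : (m : F) ≠ 0) (v : (Fin c × ZMod m) ⊕ Fin f → F)
    (i : Fin c) : ∑ j : ZMod m, (v - aqcAverage v) (.inl (i, j)) = 0 := by
  simp only [Pi.sub_apply, sum_sub_distrib, aqcAverage, sum_const, card_univ, ZMod.card,
    nsmul_eq_mul, mul_inv_cancel_left₀ hm, sub_self]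

theorem sub_aqcAverage_inr (v : (Fin c × ZMod m) ⊕ Fin f → F) (j : Fin f) :
    (v - aqcAverage v) (.inr j) = 0 :=
  sub_self _

variable {C : Submodule F ((Fin c × ZMod m) ⊕ Fin f → F)} {v : (Fin c × ZMod m) ⊕ Fin f → F}

theorem aqcAverage_mem (hm : (m : F) ≠ 0) (hC : ∀ v ∈ C, aqcShift v ∈ C) (hv : v ∈ C) :
    aqcAverage v ∈ C := by
  rw [aqcAverage_eq_smul_sum hm]
  refine C.smul_mem _ (C.sum_mem fun k _ => ?_)
  induction k.val with
  | zero => exact hv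
  | succ k ih => rw [Function.iterate_succ_apply']; exact hC _ ih

theorem aqcAverage_mem_aqcFixedCode (hm : (m : F) ≠ 0) (hC : ∀ v ∈ C, aqcShift v ∈ C)
    (hv : v ∈ C) : aqcAverage v ∈ aqcFixedCode C :=
  ⟨aqcAverage_mem hm hC hv, aqcShift_aqcAverage v⟩

theorem sub_aqcAverage_mem_aqcEvenCode (hm : (m : F) ≠ 0) (hC : ∀ v ∈ C, aqcShift v ∈ C)
    (hv : v ∈ C) : v - aqcAverage v ∈ aqcEvenCode C :=
  ⟨C.sub_mem hv (aqcAverage_mem hm hC hv), sum_sub_aqcAverage_inl hm v, sub_aqcAverage_inr v⟩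

end PermutationOfType

theorem aqc_code_iff_fixed_and_even_general {F : Type*} [Field F] (p : ℕ) [CharP F p]
    {c m f : ℕ} [NeZero m] (hm : ¬ p ∣ m)
    (C : Submodule F ((Fin c × ZMod m) ⊕ Fin f → F))
    (hC : ∀ v, v ∈ C ↔ aqcShift v ∈ C) :
    IsLCDSet (C : Set ((Fin c × ZMod m) ⊕ Fin f → F)) ↔
      (IsLCDSet (aqcFixedCode C) ∧ IsLCDSet (aqcEvenCode C)) := by
  have hmF : (m : F) ≠ 0 := fun h => hm ((CharP.cast_eq_zero_iff F p m).mp h)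
  have hCσ : ∀ v ∈ C, aqcShift v ∈ C := fun v => (hC v).mp
  refine isLCDSet_iff_of_orthogonal_decomposition (fun _ h => h.1) (fun _ h => h.1)
    ⟨C.zero_mem, by funext x; cases x <;> rfl⟩
    ⟨C.zero_mem, fun _ => sum_const_zero, fun _ => rfl⟩ ?_ ?_
  · rintro u ⟨-, hu⟩ w ⟨-, hw, hw'⟩
    exact eInner_eq_zero_of_aqcShift_eq_self hu hw hw'
  · exact fun v hv => ⟨aqcAverage v, aqcAverage_mem_aqcFixedCode hmF hCσ hv,
      v - aqcAverage v, sub_aqcAverage_mem_aqcEvenCode hmF hCσ hv, (add_sub_cancel _ _).symm⟩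

/-- Let `F` be a finite field of characteristic `p` with `p ∤ m`, and let
`C` be a linear code of length `n = cm + f` over `F` with a permutation automorphism `σ` of
type `m-(c,f)`. Then `C` is Euclidean LCD if and only if both `F_σ(C)` and `E_σ(C)`
are Euclidean LCD. -/
theorem aqc_code_iff_fixed_and_even {F : Type*} [Field F] [Fintype F] (p : ℕ) [CharP F p]
    {c m f : ℕ} [NeZero m] (hm : ¬ p ∣ m)
    (C : Submodule F ((Fin c × ZMod m) ⊕ Fin f → F))
    (hC : ∀ v, v ∈ C ↔ aqcShift v ∈ C) :
    IsLCDSet (C : Set ((Fin c × ZMod m) ⊕ Fin f → F)) ↔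
      (IsLCDSet (aqcFixedCode C) ∧ IsLCDSet (aqcEvenCode C)) :=
  aqc_code_iff_fixed_and_even_general p hm C hC
end
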